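/- Let m ≥ 1 and let T = (T_1,T_2) be a 2-tiling of the Aztec diamond AD_m with no interactions. Then for every 1 ≤ i ≤ m, the first min(i, m−i+1) steps of the i-th path of T_1 are (2,0) steps, and the first min(i−1, m−i+1) steps of the i-th path of T_2 are (2,0) steps. -/

import Mathlib

namespace Aztec

/-- A lattice square, identified by its lower-left corner. -/
abbrev Cell : Type := ℤ × ℤ

/-- The unit lattice square with lower-left corner `c` is contained in the
region `{(x, y) : |x| + |y| ≤ m + 1}`, i.e. lies in the Aztec diamond of rank `m`. -/
def inAD (m : ℕ) (c : Cell) : Prop :=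
  max |c.1| |c.1 + 1| + max |c.2| |c.2 + 1| ≤ (m : ℤ) + 1

/-- A domino: either the horizontal `2×1` rectangle made of the lattice squares with
lower-left corners `(a, b)` and `(a+1, b)`, or the vertical `1×2` rectangle made of the
lattice squares with lower-left corners `(a, b)` and `(a, b+1)`. -/
inductive Domino : Type where
  | horiz : ℤ → ℤ → Domino
  | vert : ℤ → ℤ → Domino
deriving DecidableEq

/-- The two lattice squares occupied by a domino. -/
def Domino.cells : Domino → Finset Cell
  | .horiz a b => {(a, b), (a + 1, b)}
  | .vert a b => {(a, b), (a, b + 1)}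

/-- A domino tiling of the Aztec diamond of rank `m`: a set of dominos all of whose
squares lie in the Aztec diamond, such that every square of the Aztec diamond is covered
by exactly one domino. -/
structure Tiling (m : ℕ) where
  dominos : Finset Domino
  inside : ∀ d ∈ dominos, ∀ c ∈ d.cells, inAD m c
  covers : ∀ c : Cell, inAD m c → ∃! d, d ∈ dominos ∧ c ∈ d.cells

/-- The square `[a,a+1] × [b,b+1]` is gray iff `a + b + m` is even. -/
def grayB (m : ℕ) (c : Cell) : Bool := (c.1 + c.2 + (m : ℤ)) % 2 == 0

/-- The square `[a,a+1] × [b,b+1]` is white iff `a + b + m` is odd. -/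
def whiteB (m : ℕ) (c : Cell) : Bool := ! grayB m c

/-- The steps of a Schröder-type path: North-East `(1,1)`, South-East `(1,-1)`,
East `(2,0)`. -/
inductive Step : Type where
  | up : Step
  | down : Step
  | flat : Step
deriving DecidableEq

/-- The displacement vector of a step. -/
def Step.vec : Step → ℝ × ℝ
  | .up => (1, 1)
  | .down => (1, -1)
  | .flat => (2, 0)

/-- The union in `ℝ²` of the segments of a path starting at `p` with the given steps. -/
def pathSet : ℝ × ℝ → List Step → Set (ℝ × ℝ)
  | p, [] => {p}
  | p, s :: rest => segment ℝ p (p + s.vec) ∪ pathSet (p + s.vec) rest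

/-- The endpoint of a path starting at `p` with the given steps. -/
def endpt : ℝ × ℝ → List Step → ℝ × ℝ
  | p, [] => p
  | p, s :: rest => endpt (p + s.vec) rest

/-- The starting point `(-m-1+i, 1/2-i)` of the `i`-th path (`i : Fin m` is 0-indexed,
corresponding to `i+1 ∈ {1, …, m}`). -/
noncomputable def startPt (m : ℕ) (i : Fin m) : ℝ × ℝ :=
  (-(m : ℝ) - 1 + (((i : ℕ) : ℝ) + 1), 1 / 2 - (((i : ℕ) : ℝ) + 1))

/-- The ending point `(m+1-i, 1/2-i)` of the `i`-th path. -/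
noncomputable def finishPt (m : ℕ) (i : Fin m) : ℝ × ℝ :=
  ((m : ℝ) + 1 - (((i : ℕ) : ℝ) + 1), 1 / 2 - (((i : ℕ) : ℝ) + 1))

/-- The segment drawn on a domino: a type-I domino (gray right square) carries the
horizontal segment joining the midpoints of its left and right edges; a type-II domino
(gray top square) carries the segment from the midpoint of the left edge of its bottom
square to the midpoint of the right edge of its top square; a type-IV domino (gray bottom
square) carries the segment from the midpoint of the left edge of its top square to the
midpoint of the right edge of its bottom square; a type-III domino carries no segment. -/
noncomputable def dominoSeg (m : ℕ) : Domino → Set (ℝ × ℝ)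
  | .horiz a b =>
      if grayB m (a + 1, b) then
        segment ℝ ((a : ℝ), (b : ℝ) + 1 / 2) ((a : ℝ) + 2, (b : ℝ) + 1 / 2)
      else ∅
  | .vert a b =>
      if grayB m (a, b + 1) then
        segment ℝ ((a : ℝ), (b : ℝ) + 1 / 2) ((a : ℝ) + 1, (b : ℝ) + 3 / 2)
      else
        segment ℝ ((a : ℝ), (b : ℝ) + 3 / 2) ((a : ℝ) + 1, (b : ℝ) + 1 / 2)

/-- `P` is the family of paths of the tiling `T`: the `i`-th path runs from
`(-m-1+i, 1/2-i)` to `(m+1-i, 1/2-i)`, the paths are pairwise disjoint, and together they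
trace out exactly the segments drawn on the dominos of `T`. -/
def IsPathFamily (m : ℕ) (T : Tiling m) (P : Fin m → List Step) : Prop :=
  (∀ i : Fin m, endpt (startPt m i) (P i) = finishPt m i) ∧
  (∀ i j : Fin m, i ≠ j →
    Disjoint (pathSet (startPt m i) (P i)) (pathSet (startPt m j) (P j))) ∧
  (⋃ i : Fin m, pathSet (startPt m i) (P i)) = ⋃ d ∈ T.dominos, dominoSeg m d

/-- The list of steps of a path starting at `p`, each recorded as the pair
(ending point of the step, type of the step). -/
def stepList : ℝ × ℝ → List Step → List ((ℝ × ℝ) × Step)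
  | _, [] => []
  | p, s :: rest => (p + s.vec, s) :: stepList (p + s.vec) rest

/-- An interaction between the path family `P` of a smaller color and the path family
`P'` of a larger color: a step `e` of a path of `P` and a step `f` of a path of `P'`
ending at the same point, whose pair of step types is `((1,-1),(2,0))`, `((1,1),(1,1))`,
`((2,0),(1,1))` or `((1,-1),(1,1))`. -/
def StepInteraction (m : ℕ) (P P' : Fin m → List Step) : Prop :=
  ∃ i i' : Fin m, ∃ q : ℝ × ℝ, ∃ s s' : Step,
    (q, s) ∈ stepList (startPt m i) (P i) ∧
    (q, s') ∈ stepList (startPt m i') (P' i') ∧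
    ((s = .down ∧ s' = .flat) ∨ (s = .up ∧ s' = .up) ∨
      (s = .flat ∧ s' = .up) ∨ (s = .down ∧ s' = .up))

/- ===== auxiliary development ===== -/

/-- Kind of a lattice point of a path at an integer column: either the interior
point of a flat step, or a node reached by a step of the given type. -/
inductive K : Type where
  | inner : K
  | node : Step → K
deriving DecidableEq

/-- shift the level of a profile entry -/
def shiftE (c : ℤ) : ℤ × K → ℤ × K := fun e => (e.1 + c, e.2)

/-- The profile of a path: entry `t` records the (relative) level of the path at
column offset `t+1` from the start, together with the kind of point there. -/
def pA : List Step → List (ℤ × K)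
  | [] => []
  | .up :: r => ((1 : ℤ), K.node .up) :: (pA r).map (shiftE 1)
  | .down :: r => ((-1 : ℤ), K.node .down) :: (pA r).map (shiftE (-1))
  | .flat :: r => ((0 : ℤ), K.inner) :: ((0 : ℤ), K.node .flat) :: pA r

/-- total horizontal width of a list of steps -/
def wd : List Step → ℕ
  | [] => 0
  | .up :: r => 1 + wd r
  | .down :: r => 1 + wd r
  | .flat :: r => 2 + wd r

/-- total vertical rise of a list of steps -/
def rs : List Step → ℤ
  | [] => 0
  | .up :: r => 1 + rs r
  | .down :: r => -1 + rs r
  | .flat :: r => rs r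

lemma wd_pos {L : List Step} (h : L ≠ []) : 0 < wd L := by
  cases L with
  | nil => simp at h
  | cons s r => cases s <;> simp [wd] <;> omega

lemma pA_length (L : List Step) : (pA L).length = wd L := by
  induction L with
  | nil => rfl
  | cons s r ih => cases s <;> simp [pA, wd, ih] <;> omega

lemma wd_replicate (j : ℕ) : wd (List.replicate j .flat) = 2 * j := by
  induction j with
  | zero => rfl
  | succ j ih => rw [List.replicate_succ]; show 2 + wd _ = _; omega

/-- relation between consecutive profile entries -/
def Rel (z z' : ℤ) (k' : K) : Prop :=
  (k' = .node .up ∧ z' = z + 1) ∨ (k' = .node .down ∧ z' = z - 1) ∨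
  (k' = .node .flat ∧ z' = z) ∨ (k' = .inner ∧ z' = z)

lemma Rel.shift {z z' : ℤ} {k' : K} (c : ℤ) (h : Rel z z' k') : Rel (z + c) (z' + c) k' := by
  rcases h with ⟨h1, h2⟩ | ⟨h1, h2⟩ | ⟨h1, h2⟩ | ⟨h1, h2⟩
  · exact Or.inl ⟨h1, by omega⟩
  · exact Or.inr (Or.inl ⟨h1, by omega⟩)
  · exact Or.inr (Or.inr (Or.inl ⟨h1, by omega⟩))
  · exact Or.inr (Or.inr (Or.inr ⟨h1, by omega⟩))

lemma pA_head {L : List Step} {z : ℤ} {k : K} (h : (pA L)[0]? = some (z, k)) :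
    Rel 0 z k := by
  cases L with
  | nil => simp [pA] at h
  | cons s r =>
    cases s <;> simp [pA] at h <;> obtain ⟨rfl, rfl⟩ := h
    · exact Or.inl ⟨rfl, by omega⟩
    · exact Or.inr (Or.inl ⟨rfl, by omega⟩)
    · exact Or.inr (Or.inr (Or.inr ⟨rfl, by omega⟩))

lemma pA_adj : ∀ (L : List Step) (n : ℕ) {z z' : ℤ} {k k' : K},
    (pA L)[n]? = some (z, k) → (pA L)[n + 1]? = some (z', k') → Rel z z' k' := by
  intro L
  induction L with
  | nil => intro n z z' k k' h; simp [pA] at h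
  | cons s r ih =>
    intro n z z' k k' h h'
    cases s with
    | up =>
      simp only [pA] at h h'
      match n with
      | 0 =>
        rw [List.getElem?_cons_zero] at h
        obtain ⟨rfl, rfl⟩ : (1 : ℤ) = z ∧ K.node .up = k := by
          simpa [eq_comm] using h
        rw [List.getElem?_cons_succ, List.getElem?_map] at h'
        obtain ⟨⟨w, kk⟩, he, hee⟩ := Option.map_eq_some_iff.mp h'
        obtain ⟨rfl, rfl⟩ : w + 1 = z' ∧ kk = k' := by simpa [shiftE] using hee
        simpa using (pA_head he).shift 1
      | Nat.succ n =>
        rw [List.getElem?_cons_succ, List.getElem?_map] at h h'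
        obtain ⟨⟨w, kk⟩, he, hee⟩ := Option.map_eq_some_iff.mp h
        obtain ⟨rfl, rfl⟩ : w + 1 = z ∧ kk = k := by simpa [shiftE] using hee
        obtain ⟨⟨w', kk'⟩, he', hee'⟩ := Option.map_eq_some_iff.mp h'
        obtain ⟨rfl, rfl⟩ : w' + 1 = z' ∧ kk' = k' := by simpa [shiftE] using hee'
        exact (ih n he he').shift 1
    | down =>
      simp only [pA] at h h'
      match n with
      | 0 =>
        rw [List.getElem?_cons_zero] at h
        obtain ⟨rfl, rfl⟩ : (-1 : ℤ) = z ∧ K.node .down = k := by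
          simpa [eq_comm] using h
        rw [List.getElem?_cons_succ, List.getElem?_map] at h'
        obtain ⟨⟨w, kk⟩, he, hee⟩ := Option.map_eq_some_iff.mp h'
        obtain ⟨rfl, rfl⟩ : w + (-1) = z' ∧ kk = k' := by simpa [shiftE] using hee
        simpa using (pA_head he).shift (-1)
      | Nat.succ n =>
        rw [List.getElem?_cons_succ, List.getElem?_map] at h h'
        obtain ⟨⟨w, kk⟩, he, hee⟩ := Option.map_eq_some_iff.mp h
        obtain ⟨rfl, rfl⟩ : w + (-1) = z ∧ kk = k := by simpa [shiftE] using hee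
        obtain ⟨⟨w', kk'⟩, he', hee'⟩ := Option.map_eq_some_iff.mp h'
        obtain ⟨rfl, rfl⟩ : w' + (-1) = z' ∧ kk' = k' := by simpa [shiftE] using hee'
        exact (ih n he he').shift (-1)
    | flat =>
      simp only [pA] at h h'
      match n with
      | 0 =>
        rw [List.getElem?_cons_zero] at h
        rw [List.getElem?_cons_succ, List.getElem?_cons_zero] at h'
        obtain ⟨rfl, rfl⟩ : (0 : ℤ) = z ∧ K.inner = k := by simpa [eq_comm] using h
        obtain ⟨rfl, rfl⟩ : (0 : ℤ) = z' ∧ K.node .flat = k' := by simpa [eq_comm] using h'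
        exact Or.inr (Or.inr (Or.inl ⟨rfl, rfl⟩))
      | 1 =>
        rw [List.getElem?_cons_succ, List.getElem?_cons_zero] at h
        rw [List.getElem?_cons_succ, List.getElem?_cons_succ] at h'
        obtain ⟨rfl, rfl⟩ : (0 : ℤ) = z ∧ K.node .flat = k := by simpa [eq_comm] using h
        exact pA_head h'
      | Nat.succ (Nat.succ n) =>
        rw [List.getElem?_cons_succ, List.getElem?_cons_succ] at h h'
        exact ih n h h'

def kpar : K → ℤ
  | .inner => 1
  | .node _ => 0

lemma pA_par : ∀ (L : List Step) (n : ℕ) {z : ℤ} {k : K},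
    (pA L)[n]? = some (z, k) → ((n : ℤ) + 1 + z) % 2 = kpar k := by
  intro L
  induction L with
  | nil => intro n z k h; simp [pA] at h
  | cons s r ih =>
    intro n z k h
    cases s with
    | up =>
      simp only [pA] at h
      match n with
      | 0 =>
        rw [List.getElem?_cons_zero] at h
        obtain ⟨rfl, rfl⟩ : (1 : ℤ) = z ∧ K.node .up = k := by simpa [eq_comm] using h
        simp [kpar]
      | Nat.succ n =>
        rw [List.getElem?_cons_succ, List.getElem?_map] at h
        obtain ⟨⟨w, kk⟩, he, hee⟩ := Option.map_eq_some_iff.mp h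
        obtain ⟨rfl, rfl⟩ : w + 1 = z ∧ kk = k := by simpa [shiftE] using hee
        have := ih n he
        push_cast
        push_cast at this
        omega
    | down =>
      simp only [pA] at h
      match n with
      | 0 =>
        rw [List.getElem?_cons_zero] at h
        obtain ⟨rfl, rfl⟩ : (-1 : ℤ) = z ∧ K.node .down = k := by simpa [eq_comm] using h
        simp [kpar]
      | Nat.succ n =>
        rw [List.getElem?_cons_succ, List.getElem?_map] at h
        obtain ⟨⟨w, kk⟩, he, hee⟩ := Option.map_eq_some_iff.mp h
        obtain ⟨rfl, rfl⟩ : w + (-1) = z ∧ kk = k := by simpa [shiftE] using hee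
        have := ih n he
        push_cast
        push_cast at this
        omega
    | flat =>
      simp only [pA] at h
      match n with
      | 0 =>
        rw [List.getElem?_cons_zero] at h
        obtain ⟨rfl, rfl⟩ : (0 : ℤ) = z ∧ K.inner = k := by simpa [eq_comm] using h
        simp [kpar]
      | 1 =>
        rw [List.getElem?_cons_succ, List.getElem?_cons_zero] at h
        obtain ⟨rfl, rfl⟩ : (0 : ℤ) = z ∧ K.node .flat = k := by simpa [eq_comm] using h
        simp [kpar]
      | Nat.succ (Nat.succ n) =>
        rw [List.getElem?_cons_succ, List.getElem?_cons_succ] at h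
        have := ih n h
        push_cast
        push_cast at this
        omega

lemma pA_rep_get (j : ℕ) (M : List Step) (t : ℕ) :
    (pA (List.replicate j .flat ++ M))[2 * j + t]? = (pA M)[t]? := by
  induction j with
  | zero => simp
  | succ j ih =>
    rw [List.replicate_succ, List.cons_append]
    show (pA (.flat :: _))[_]? = _
    simp only [pA]
    rw [show 2 * (j + 1) + t = (2 * j + t) + 1 + 1 by ring]
    rw [List.getElem?_cons_succ, List.getElem?_cons_succ, ih]

lemma pA_rep_get_lt (j : ℕ) (M : List Step) (t : ℕ) (ht : t < 2 * j) :
    (pA (List.replicate j .flat ++ M))[t]?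
      = some (0, if t % 2 = 0 then K.inner else K.node .flat) := by
  induction j generalizing t with
  | zero => omega
  | succ j ih =>
    rw [List.replicate_succ, List.cons_append]
    show (pA (.flat :: _))[_]? = _
    simp only [pA]
    match t with
    | 0 => simp
    | 1 => simp
    | Nat.succ (Nat.succ t) =>
      rw [List.getElem?_cons_succ, List.getElem?_cons_succ, ih t (by omega)]
      have h2 : Nat.succ (Nat.succ t) % 2 = t % 2 := by omega
      rw [h2]

lemma pA_last : ∀ (L : List Step), L ≠ [] →
    ∃ k, (pA L)[wd L - 1]? = some (rs L, k) := by
  intro L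
  induction L with
  | nil => intro h; simp at h
  | cons s r ih =>
    intro _
    by_cases hr : r = []
    · subst hr
      cases s
      · exact ⟨_, rfl⟩
      · exact ⟨_, rfl⟩
      · exact ⟨_, rfl⟩
    · obtain ⟨k, hk⟩ := ih hr
      have hwr := wd_pos hr
      obtain ⟨u, hu⟩ : ∃ u, wd r = u + 1 := ⟨wd r - 1, by omega⟩
      refine ⟨k, ?_⟩
      cases s with
      | up =>
        show ((_ :: (pA r).map (shiftE 1))[1 + wd r - 1]?) = some (1 + rs r, k)
        rw [show 1 + wd r - 1 = (wd r - 1) + 1 by omega, List.getElem?_cons_succ, List.getElem?_map, hk]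
        simp [shiftE]; omega
      | down =>
        show ((_ :: (pA r).map (shiftE (-1)))[1 + wd r - 1]?) = some (-1 + rs r, k)
        rw [show 1 + wd r - 1 = (wd r - 1) + 1 by omega, List.getElem?_cons_succ, List.getElem?_map, hk]
        simp [shiftE]; omega
      | flat =>
        show ((_ :: _ :: pA r)[2 + wd r - 1]?) = some (rs r, k)
        rw [show 2 + wd r - 1 = (wd r - 1) + 1 + 1 by omega,
          List.getElem?_cons_succ, List.getElem?_cons_succ, hk]

lemma endpt_eq : ∀ (L : List Step) (p : ℝ × ℝ),
    endpt p L = (p.1 + (wd L : ℝ), p.2 + (rs L : ℝ)) := by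
  intro L
  induction L with
  | nil => intro p; simp [endpt, wd, rs]
  | cons s r ih =>
    intro p
    cases s <;>
      · show endpt (p + _) r = _
        rw [ih]
        simp only [Step.vec, wd, rs, Prod.ext_iff, Prod.fst_add, Prod.snd_add]
        constructor <;> push_cast <;> ring

lemma stepList_mem : ∀ (L : List Step) (p : ℝ × ℝ) (t : ℕ) {z : ℤ} {s : Step},
    (pA L)[t]? = some (z, K.node s) →
    ((p.1 + (t : ℝ) + 1, p.2 + (z : ℝ)), s) ∈ stepList p L := by
  intro L
  induction L with
  | nil => intro p t z s h; simp [pA] at h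
  | cons s₀ r ih =>
    intro p t z s h
    cases s₀ with
    | up =>
      simp only [pA] at h
      match t with
      | 0 =>
        rw [List.getElem?_cons_zero] at h
        obtain ⟨rfl, h2⟩ : (1 : ℤ) = z ∧ K.node Step.up = K.node s := by simpa [eq_comm] using h
        obtain rfl : Step.up = s := by injection h2
        refine List.mem_cons.mpr (Or.inl ?_)
        simp [Step.vec, Prod.ext_iff]
      | Nat.succ t =>
        rw [List.getElem?_cons_succ, List.getElem?_map] at h
        obtain ⟨⟨w, kk⟩, he, hee⟩ := Option.map_eq_some_iff.mp h
        obtain ⟨rfl, rfl⟩ : w + 1 = z ∧ kk = K.node s := by simpa [shiftE] using hee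
        have := ih (p + Step.up.vec) t he
        refine List.mem_cons.mpr (Or.inr ?_)
        convert this using 3 <;> simp [Step.vec] <;> push_cast <;> ring
    | down =>
      simp only [pA] at h
      match t with
      | 0 =>
        rw [List.getElem?_cons_zero] at h
        obtain ⟨rfl, h2⟩ : (-1 : ℤ) = z ∧ K.node Step.down = K.node s := by simpa [eq_comm] using h
        obtain rfl : Step.down = s := by injection h2
        refine List.mem_cons.mpr (Or.inl ?_)
        simp [Step.vec, Prod.ext_iff]
      | Nat.succ t =>
        rw [List.getElem?_cons_succ, List.getElem?_map] at h
        obtain ⟨⟨w, kk⟩, he, hee⟩ := Option.map_eq_some_iff.mp h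
        obtain ⟨rfl, rfl⟩ : w + (-1) = z ∧ kk = K.node s := by simpa [shiftE] using hee
        have := ih (p + Step.down.vec) t he
        refine List.mem_cons.mpr (Or.inr ?_)
        convert this using 3 <;> simp [Step.vec] <;> push_cast <;> ring
    | flat =>
      simp only [pA] at h
      match t with
      | 0 =>
        rw [List.getElem?_cons_zero] at h
        exact absurd h (by simp)
      | 1 =>
        rw [List.getElem?_cons_succ, List.getElem?_cons_zero] at h
        obtain ⟨rfl, h2⟩ : (0 : ℤ) = z ∧ K.node Step.flat = K.node s := by simpa [eq_comm] using h
        obtain rfl : Step.flat = s := by injection h2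
        refine List.mem_cons.mpr (Or.inl ?_)
        simp [Step.vec, Prod.ext_iff]
        ring_nf
      | Nat.succ (Nat.succ t) =>
        rw [List.getElem?_cons_succ, List.getElem?_cons_succ] at h
        have := ih (p + Step.flat.vec) t h
        refine List.mem_cons.mpr (Or.inr ?_)
        convert this using 3 <;> simp [Step.vec] <;> push_cast <;> ring

lemma wd_append (L M : List Step) : wd (L ++ M) = wd L + wd M := by
  induction L with
  | nil => simp [wd]
  | cons s r ih => cases s <;> simp [wd, ih] <;> omega

lemma start_mem_pathSet (p : ℝ × ℝ) (L : List Step) : p ∈ pathSet p L := by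
  cases L with
  | nil => exact rfl
  | cons s r => exact Set.mem_union_left _ (left_mem_segment ℝ _ _)

lemma step1_mem_pathSet (p : ℝ × ℝ) (s : Step) (L : List Step) :
    p + s.vec ∈ pathSet p (s :: L) :=
  Set.mem_union_left _ (right_mem_segment ℝ _ _)

lemma max_abs (a : ℤ) : max |a| |a + 1| = if 0 ≤ a then a + 1 else -a := by
  rcases le_or_gt 0 a with h | h
  · rw [if_pos h, abs_of_nonneg h, abs_of_nonneg (by omega), max_eq_right (by omega)]
  · rw [if_neg (by omega), abs_of_neg h, abs_of_nonpos (by omega), max_eq_left (by omega)]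

/-- The key non-crossing lemma: if two paths start at the same point, have the
same width and rise, and have no forbidden co-ending steps, then the first path
is always weakly below the second. -/
lemma claimA (p : ℝ × ℝ) (L₁ L₂ : List Step) (W : ℕ)
    (hW1 : wd L₁ = W) (hW2 : wd L₂ = W) (hr : rs L₁ = rs L₂)
    (hno : ∀ (q : ℝ × ℝ) (s₁ s₂ : Step),
      (q, s₁) ∈ stepList p L₁ → (q, s₂) ∈ stepList p L₂ →
      ¬ ((s₁ = .down ∧ s₂ = .flat) ∨ (s₁ = .up ∧ s₂ = .up) ∨
        (s₁ = .flat ∧ s₂ = .up) ∨ (s₁ = .down ∧ s₂ = .up))) :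
    ∀ (t : ℕ) (z₁ z₂ : ℤ) (k₁ k₂ : K), (pA L₁)[t]? = some (z₁, k₁) →
      (pA L₂)[t]? = some (z₂, k₂) → z₁ ≤ z₂ := by
  have key : ∀ (d t : ℕ) (z₁ z₂ : ℤ) (k₁ k₂ : K), W - 1 - t = d →
      (pA L₁)[t]? = some (z₁, k₁) → (pA L₂)[t]? = some (z₂, k₂) → z₁ ≤ z₂ := by
    intro d
    induction d with
    | zero =>
      intro t z₁ z₂ k₁ k₂ hd e1 e2
      have ht1 : t < (pA L₁).length := by
        by_contra hc
        rw [List.getElem?_eq_none_iff.mpr (by omega)] at e1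
        exact absurd e1 (by simp)
      rw [pA_length, hW1] at ht1
      have hL1 : L₁ ≠ [] := by
        intro h; rw [h] at hW1; simp [wd] at hW1; omega
      have hL2 : L₂ ≠ [] := by
        intro h; rw [h] at hW2; simp [wd] at hW2; omega
      obtain ⟨k, hk⟩ := pA_last L₁ hL1
      obtain ⟨k', hk'⟩ := pA_last L₂ hL2
      rw [hW1, show W - 1 = t by omega] at hk
      rw [hW2, show W - 1 = t by omega] at hk'
      have h1 := e1.symm.trans hk
      have h2 := e2.symm.trans hk'
      obtain ⟨ha, -⟩ := Prod.mk.injEq .. ▸ Option.some.injEq .. ▸ h1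
      obtain ⟨hb, -⟩ := Prod.mk.injEq .. ▸ Option.some.injEq .. ▸ h2
      omega
    | succ d ih =>
      intro t z₁ z₂ k₁ k₂ hd e1 e2
      by_contra hlt
      push_neg at hlt
      have ht1 : t + 1 < (pA L₁).length := by rw [pA_length, hW1]; omega
      have ht2 : t + 1 < (pA L₂).length := by rw [pA_length, hW2]; omega
      obtain ⟨⟨z₁', k₁'⟩, e1'⟩ : ∃ e, (pA L₁)[t + 1]? = some e :=
        ⟨_, List.getElem?_eq_getElem ht1⟩
      obtain ⟨⟨z₂', k₂'⟩, e2'⟩ : ∃ e, (pA L₂)[t + 1]? = some e :=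
        ⟨_, List.getElem?_eq_getElem ht2⟩
      have r1 := pA_adj L₁ t e1 e1'
      have r2 := pA_adj L₂ t e2 e2'
      have hle : z₁' ≤ z₂' := ih (t + 1) _ _ _ _ (by omega) e1' e2'
      have par1 := pA_par L₁ (t + 1) e1'
      have par2 := pA_par L₂ (t + 1) e2'
      have mem1 : ∀ s, k₁' = K.node s →
          ((p.1 + ((t+1 : ℕ) : ℝ) + 1, p.2 + (z₁' : ℝ)), s) ∈ stepList p L₁ := by
        intro s hs; exact stepList_mem L₁ p (t + 1) (hs ▸ e1')
      have mem2 : ∀ s, k₂' = K.node s →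
          ((p.1 + ((t+1 : ℕ) : ℝ) + 1, p.2 + (z₂' : ℝ)), s) ∈ stepList p L₂ := by
        intro s hs; exact stepList_mem L₂ p (t + 1) (hs ▸ e2')
      rcases r1 with ⟨hk1, hz1⟩ | ⟨hk1, hz1⟩ | ⟨hk1, hz1⟩ | ⟨hk1, hz1⟩ <;>
        rcases r2 with ⟨hk2, hz2⟩ | ⟨hk2, hz2⟩ | ⟨hk2, hz2⟩ | ⟨hk2, hz2⟩ <;>
        rw [hk1] at par1 <;> rw [hk2] at par2 <;> simp only [kpar] at par1 par2
      -- most cases are killed by arithmetic/parity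
      all_goals try omega
      -- remaining: genuine co-ending interactions
      · -- (down, up) with z₁ = z₂ + 2
        have hz : z₁' = z₂' := by omega
        exact hno _ _ _ (mem1 _ hk1) (hz ▸ mem2 _ hk2) (by tauto)
      · -- (down, flat)
        have hz : z₁' = z₂' := by omega
        exact hno _ _ _ (mem1 _ hk1) (hz ▸ mem2 _ hk2) (by tauto)
      · -- (flat, up)
        have hz : z₁' = z₂' := by omega
        exact hno _ _ _ (mem1 _ hk1) (hz ▸ mem2 _ hk2) (by tauto)
  intro t z₁ z₂ k₁ k₂ e1 e2
  exact key (W - 1 - t) t z₁ z₂ k₁ k₂ rfl e1 e2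
/-- In a 2-tiling of the Aztec diamond of rank `m` with no interactions, the `i`-th path
of the first tiling starts with `min(i, m-i+1)` horizontal steps and the `i`-th path of
the second tiling starts with `min(i-1, m-i+1)` horizontal steps. -/
theorem frozen_steps_two_tiling (m : ℕ) (hm : 1 ≤ m) (T₁ T₂ : Tiling m)
    (P₁ P₂ : Fin m → List Step)
    (h₁ : IsPathFamily m T₁ P₁) (h₂ : IsPathFamily m T₂ P₂)
    (hno : ¬ StepInteraction m P₁ P₂) :
    ∀ i : Fin m,
      (P₁ i).take (min ((i : ℕ) + 1) (m - (i : ℕ))) =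
        List.replicate (min ((i : ℕ) + 1) (m - (i : ℕ))) Step.flat ∧
      (P₂ i).take (min (i : ℕ) (m - (i : ℕ))) =
        List.replicate (min (i : ℕ) (m - (i : ℕ))) Step.flat := by
  obtain ⟨hend₁, hdisj₁, huni₁⟩ := h₁
  obtain ⟨hend₂, hdisj₂, huni₂⟩ := h₂
  have hwr : ∀ (Q : Fin m → List Step), (∀ i, endpt (startPt m i) (Q i) = finishPt m i) →
      ∀ i : Fin m, wd (Q i) = 2 * (m - (i : ℕ)) ∧ rs (Q i) = 0 := by
    intro Q hQ i
    have h := hQ i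
    rw [endpt_eq, startPt, finishPt, Prod.ext_iff] at h
    obtain ⟨hx, hy⟩ := h
    simp only at hx hy
    have hi := i.isLt
    constructor
    · have h1 : ((wd (Q i) : ℤ) : ℝ) = 2 * (m : ℝ) - 2 * ((i : ℕ) : ℝ) := by
        push_cast; linarith
      have h2 : (wd (Q i) : ℤ) = 2 * (m : ℤ) - 2 * ((i : ℕ) : ℤ) := by exact_mod_cast h1
      omega
    · have h1 : ((rs (Q i) : ℤ) : ℝ) = 0 := by push_cast; linarith
      exact_mod_cast h1
  have hW₁ := fun i => (hwr P₁ hend₁ i).1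
  have hW₂ := fun i => (hwr P₂ hend₂ i).1
  have hrs₁ := fun i => (hwr P₁ hend₁ i).2
  have hrs₂ := fun i => (hwr P₂ hend₂ i).2
  have hnoP : ∀ i : Fin m, ∀ (q : ℝ × ℝ) (s₁ s₂ : Step),
      (q, s₁) ∈ stepList (startPt m i) (P₁ i) → (q, s₂) ∈ stepList (startPt m i) (P₂ i) →
      ¬ ((s₁ = .down ∧ s₂ = .flat) ∨ (s₁ = .up ∧ s₂ = .up) ∨
        (s₁ = .flat ∧ s₂ = .up) ∨ (s₁ = .down ∧ s₂ = .up)) :=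
    fun i q s₁ s₂ m1 m2 hf => hno ⟨i, i, q, s₁, s₂, m1, m2, hf⟩
  have getstep : ∀ (L : List Step) (i : Fin m) (j : ℕ), wd L = 2 * (m - (i : ℕ)) →
      L.take j = List.replicate j .flat → j + 1 ≤ m - (i : ℕ) →
      ∃ s, L = List.replicate j .flat ++ s :: L.drop (j + 1) := by
    intro L i j hw hp hj
    have hlen : j < L.length := by
      by_contra hc
      push_neg at hc
      have hL : L = List.replicate j .flat := by
        rw [← hp, List.take_of_length_le hc]
      rw [hL, wd_replicate] at hw
      omega
    refine ⟨L[j], ?_⟩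
    conv_lhs => rw [← List.take_append_drop j L]
    rw [hp, List.drop_eq_getElem_cons hlen]
  have takestep : ∀ (L : List Step) (j : ℕ),
      L = List.replicate j .flat ++ .flat :: L.drop (j + 1) →
      L.take (j + 1) = List.replicate (j + 1) .flat := by
    intro L j hL
    conv_lhs => rw [hL]
    rw [List.replicate_succ']
    rw [show j + 1 = (List.replicate j Step.flat).length + 1 by simp]
    rw [List.take_append]
    simp
  have key : ∀ j : ℕ, ∀ i : Fin m,
      (j ≤ min ((i : ℕ) + 1) (m - (i : ℕ)) → (P₁ i).take j = List.replicate j .flat) ∧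
      (j ≤ min (i : ℕ) (m - (i : ℕ)) → (P₂ i).take j = List.replicate j .flat) := by
    intro j
    induction j with
    | zero => intro i; simp
    | succ j ih =>
      have A1 : ∀ i : Fin m, j + 1 ≤ min ((i : ℕ) + 1) (m - (i : ℕ)) →
          (P₁ i).take (j + 1) = List.replicate (j + 1) .flat := by
        intro i hj
        have hji : j + 1 ≤ (i : ℕ) + 1 := le_trans hj (min_le_left _ _)
        have hj1 : j + 1 ≤ m - (i : ℕ) := le_trans hj (min_le_right _ _)
        have hp := (ih i).1 (by omega)
        obtain ⟨s, hL⟩ := getstep (P₁ i) i j (hW₁ i) hp hj1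
        cases s with
        | flat => exact takestep _ _ hL
        | up =>
          exfalso
          have pa1 : (pA (P₁ i))[2 * j]? = some (1, K.node .up) := by
            conv_lhs => rw [hL]
            rw [show 2 * j = 2 * j + 0 from rfl, pA_rep_get]
            rfl
          have hp2 := (ih i).2 (by omega)
          have hQ2 : P₂ i = List.replicate j .flat ++ (P₂ i).drop j := by
            conv_lhs => rw [← List.take_append_drop j (P₂ i)]
            rw [hp2]
          have hM : (P₂ i).drop j ≠ [] := by
            intro h
            have hw2 := hW₂ i
            rw [hQ2, wd_append, wd_replicate, h] at hw2
            simp [wd] at hw2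
            omega
          obtain ⟨⟨z₂, k₂⟩, e2⟩ : ∃ e, (pA ((P₂ i).drop j))[0]? = some e :=
            ⟨_, List.getElem?_eq_getElem (by rw [pA_length]; exact wd_pos hM)⟩
          have e2' : (pA (P₂ i))[2 * j]? = some (z₂, k₂) := by
            conv_lhs => rw [hQ2]
            rw [show 2 * j = 2 * j + 0 from rfl, pA_rep_get]
            exact e2
          have hle := claimA (startPt m i) (P₁ i) (P₂ i) (2 * (m - (i : ℕ))) (hW₁ i) (hW₂ i)
            (by rw [hrs₁ i, hrs₂ i]) (hnoP i) (2 * j) _ _ _ _ pa1 e2'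
          have hhead := pA_head e2
          have hk : k₂ = K.node .up ∧ z₂ = 1 := by
            rcases hhead with ⟨h, h'⟩ | ⟨h, h'⟩ | ⟨h, h'⟩ | ⟨h, h'⟩
            · exact ⟨h, by omega⟩
            · omega
            · omega
            · omega
          obtain ⟨rfl, rfl⟩ := hk
          exact hnoP i _ _ _ (stepList_mem _ _ _ pa1) (stepList_mem _ _ _ e2')
            (Or.inr (Or.inl ⟨rfl, rfl⟩))
        | down =>
          exfalso
          rcases Nat.eq_zero_or_pos j with rfl | hjpos
          · by_cases hi : (i : ℕ) + 1 < m
            · have hL' : P₁ i = .down :: (P₁ i).drop 1 := by simpa using hL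
              have hq1 : startPt m i + Step.down.vec ∈ pathSet (startPt m i) (P₁ i) := by
                rw [hL']; exact step1_mem_pathSet _ _ _
              have hq2 : startPt m i + Step.down.vec = startPt m (⟨(i : ℕ) + 1, hi⟩ : Fin m) := by
                simp [startPt, Step.vec, Prod.ext_iff]
                constructor <;> push_cast <;> ring
              have hq3 := start_mem_pathSet (startPt m (⟨(i : ℕ) + 1, hi⟩ : Fin m))
                (P₁ ⟨(i : ℕ) + 1, hi⟩)
              have hne : i ≠ (⟨(i : ℕ) + 1, hi⟩ : Fin m) := by
                intro h
                have := congrArg Fin.val h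
                simp at this
              exact Set.disjoint_left.mp (hdisj₁ i _ hne) hq1 (hq2 ▸ hq3)
            · have hiv : (i : ℕ) = m - 1 := by have := i.isLt; omega
              have hL' : P₁ i = .down :: (P₁ i).drop 1 := by simpa using hL
              have hq1 : startPt m i + Step.down.vec ∈ pathSet (startPt m i) (P₁ i) := by
                rw [hL']; exact step1_mem_pathSet _ _ _
              have hqv : startPt m i + Step.down.vec = ((0 : ℝ), -(m : ℝ) - 1/2) := by
                have hcast : ((i : ℕ) : ℝ) = (m : ℝ) - 1 := by
                  rw [hiv]
                  push_cast [Nat.cast_sub hm]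
                  ring
                simp [startPt, Step.vec, Prod.ext_iff, hcast]
                constructor <;> ring
              have hq : ((0 : ℝ), -(m : ℝ) - 1/2) ∈ ⋃ d ∈ T₁.dominos, dominoSeg m d := by
                rw [← huni₁]
                exact Set.mem_iUnion.mpr ⟨i, hqv ▸ hq1⟩
              simp only [Set.mem_iUnion] at hq
              obtain ⟨d, hd, hqd⟩ := hq
              cases d with
              | horiz a b =>
                have hin := T₁.inside _ hd (a, b) (by simp [Domino.cells])
                simp only [dominoSeg] at hqd
                split_ifs at hqd
                · rw [segment_eq_image] at hqd
                  obtain ⟨θ, hθ, hE⟩ := hqd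
                  have h2 := congrArg Prod.snd hE
                  simp only [Prod.snd_add, Prod.smul_snd, smul_eq_mul] at h2
                  have hb : (b : ℝ) = -(m : ℝ) - 1 := by linear_combination h2
                  have hbz : b = -(m : ℤ) - 1 := by exact_mod_cast hb
                  unfold inAD at hin
                  simp only at hin
                  rw [max_abs, max_abs, hbz] at hin
                  split_ifs at hin <;> omega
                · simp at hqd
              | vert a b =>
                have hin := T₁.inside _ hd (a, b) (by simp [Domino.cells])
                simp only [dominoSeg] at hqd
                have hble : (b : ℝ) ≤ -(m : ℝ) - 1 := by
                  split_ifs at hqd <;>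
                    (rw [segment_eq_image] at hqd
                     obtain ⟨θ, hθ, hE⟩ := hqd
                     obtain ⟨hθ0, hθ1⟩ := Set.mem_Icc.mp hθ
                     have h2 := congrArg Prod.snd hE
                     simp only [Prod.snd_add, Prod.smul_snd, smul_eq_mul] at h2
                     nlinarith [h2])
                have hbz : b ≤ -(m : ℤ) - 1 := by exact_mod_cast hble
                unfold inAD at hin
                simp only at hin
                rw [max_abs, max_abs] at hin
                split_ifs at hin <;> omega
          · have him : (i : ℕ) + 1 < m := by omega
            have hp2 := (ih ⟨(i : ℕ) + 1, him⟩).2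
              (show j ≤ min ((i : ℕ) + 1) (m - ((i : ℕ) + 1)) by omega)
            have hQ2 : P₂ ⟨(i : ℕ) + 1, him⟩
                = List.replicate j .flat ++ (P₂ ⟨(i : ℕ) + 1, him⟩).drop j := by
              conv_lhs => rw [← List.take_append_drop j (P₂ ⟨(i : ℕ) + 1, him⟩)]
              rw [hp2]
            have pa2 : (pA (P₂ ⟨(i : ℕ) + 1, him⟩))[2 * j - 1]?
                = some (0, K.node .flat) := by
              conv_lhs => rw [hQ2]
              rw [pA_rep_get_lt j _ _ (by omega), if_neg (by omega)]
            have pa1 : (pA (P₁ i))[2 * j]? = some (-1, K.node .down) := by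
              conv_lhs => rw [hL]
              rw [show 2 * j = 2 * j + 0 from rfl, pA_rep_get]
              rfl
            have m1 := stepList_mem (P₁ i) (startPt m i) (2 * j) pa1
            have m2 := stepList_mem (P₂ ⟨(i : ℕ) + 1, him⟩)
              (startPt m ⟨(i : ℕ) + 1, him⟩) (2 * j - 1) pa2
            refine hno ⟨i, ⟨(i : ℕ) + 1, him⟩, _, .down, .flat, m1, ?_, Or.inl ⟨rfl, rfl⟩⟩
            convert m2 using 3 <;> simp [startPt] <;>
              push_cast [Nat.cast_sub (show 1 ≤ 2 * j by omega)] <;> ring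
      refine fun i => ⟨A1 i, ?_⟩
      intro hj
      have hji : j + 1 ≤ (i : ℕ) := le_trans hj (min_le_left _ _)
      have hj1 : j + 1 ≤ m - (i : ℕ) := le_trans hj (min_le_right _ _)
      have hp := (ih i).2 (by omega)
      obtain ⟨s, hL⟩ := getstep (P₂ i) i j (hW₂ i) hp hj1
      cases s with
      | flat => exact takestep _ _ hL
      | down =>
        exfalso
        have pa2 : (pA (P₂ i))[2 * j]? = some (-1, K.node .down) := by
          conv_lhs => rw [hL]
          rw [show 2 * j = 2 * j + 0 from rfl, pA_rep_get]
          rfl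
        have hA1 := A1 i (by omega)
        have hQ1 : P₁ i = List.replicate (j + 1) .flat ++ (P₁ i).drop (j + 1) := by
          conv_lhs => rw [← List.take_append_drop (j + 1) (P₁ i)]
          rw [hA1]
        have pa1 : (pA (P₁ i))[2 * j]? = some (0, K.inner) := by
          conv_lhs => rw [hQ1]
          rw [pA_rep_get_lt (j + 1) _ _ (by omega), if_pos (by omega)]
        have hle := claimA (startPt m i) (P₁ i) (P₂ i) (2 * (m - (i : ℕ))) (hW₁ i) (hW₂ i)
          (by rw [hrs₁ i, hrs₂ i]) (hnoP i) (2 * j) _ _ _ _ pa1 pa2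
        omega
      | up =>
        exfalso
        have hilt := i.isLt
        have him : (i : ℕ) - 1 < m := by omega
        have hA1 := A1 ⟨(i : ℕ) - 1, him⟩
          (show j + 1 ≤ min (((i : ℕ) - 1) + 1) (m - ((i : ℕ) - 1)) by omega)
        have hQ1 : P₁ ⟨(i : ℕ) - 1, him⟩
            = List.replicate (j + 1) .flat ++ (P₁ ⟨(i : ℕ) - 1, him⟩).drop (j + 1) := by
          conv_lhs => rw [← List.take_append_drop (j + 1) (P₁ ⟨(i : ℕ) - 1, him⟩)]
          rw [hA1]
        have pa1 : (pA (P₁ ⟨(i : ℕ) - 1, him⟩))[2 * j + 1]? = some (0, K.node .flat) := by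
          conv_lhs => rw [hQ1]
          rw [pA_rep_get_lt (j + 1) _ _ (by omega), if_neg (by omega)]
        have pa2 : (pA (P₂ i))[2 * j]? = some (1, K.node .up) := by
          conv_lhs => rw [hL]
          rw [show 2 * j = 2 * j + 0 from rfl, pA_rep_get]
          rfl
        have m1 := stepList_mem (P₁ ⟨(i : ℕ) - 1, him⟩)
          (startPt m ⟨(i : ℕ) - 1, him⟩) (2 * j + 1) pa1
        have m2 := stepList_mem (P₂ i) (startPt m i) (2 * j) pa2
        refine hno ⟨⟨(i : ℕ) - 1, him⟩, i, _, .flat, .up, m1, ?_,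
          Or.inr (Or.inr (Or.inl ⟨rfl, rfl⟩))⟩
        convert m2 using 3 <;> simp [startPt] <;>
          push_cast [Nat.cast_sub (show 1 ≤ (i : ℕ) by omega)] <;> ring
  intro i
  exact ⟨(key (min ((i : ℕ) + 1) (m - (i : ℕ))) i).1 le_rfl,
    (key (min (i : ℕ) (m - (i : ℕ))) i).2 le_rfl⟩

end Aztec
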